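/- arXiv:1012.4890 — 3 statements merged into one kernel-verified Lean document; each statement's English description precedes it below -/
import Mathlib

section
/- If the disagreement set ds π π' is empty, then for every nominal term t, π • t is weakly equivalent to π' • t (written π • t ∼ π' • t). -/
abbrev Atom := ℕ
abbrev Var := ℕ
abbrev Perm := List (Atom × Atom)

def swap (p : Atom × Atom) (a : Atom) : Atom :=
  if a = p.1 then p.2 else if a = p.2 then p.1 else a

def permAtom : Perm → Atom → Atom
  | [], a => a
  | p :: π, a => swap p (permAtom π a)

def ds (π π' : Perm) : Set Atom := {a | permAtom π a ≠ permAtom π' a}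

inductive Trm : Type
  | unit : Trm
  | pair : Trm → Trm → Trm
  | fn : ℕ → Trm → Trm
  | atom : Atom → Trm
  | abs : Atom → Trm → Trm
  | susp : Perm → Var → Trm

def permTrm (π : Perm) : Trm → Trm
  | .unit => .unit
  | .pair t₁ t₂ => .pair (permTrm π t₁) (permTrm π t₂)
  | .fn f t => .fn f (permTrm π t)
  | .atom a => .atom (permAtom π a)
  | .abs a t => .abs (permAtom π a) (permTrm π t)
  | .susp π' X => .susp (π ++ π') X

abbrev Env := Set (Atom × Var)

inductive fresh (Γ : Env) (a : Atom) : Trm → Prop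
  | unit : fresh Γ a .unit
  | pair {t₁ t₂} : fresh Γ a t₁ → fresh Γ a t₂ → fresh Γ a (.pair t₁ t₂)
  | fn {f t} : fresh Γ a t → fresh Γ a (.fn f t)
  | abs₁ {t} : fresh Γ a (.abs a t)
  | abs₂ {b t} : a ≠ b → fresh Γ a t → fresh Γ a (.abs b t)
  | atom {b} : a ≠ b → fresh Γ a (.atom b)
  | susp {π X} : (permAtom π.reverse a, X) ∈ Γ → fresh Γ a (.susp π X)

inductive equ (Γ : Env) : Trm → Trm → Prop
  | unit : equ Γ .unit .unit
  | pair {t₁ t₂ s₁ s₂} : equ Γ t₁ t₂ → equ Γ s₁ s₂ → equ Γ (.pair t₁ s₁) (.pair t₂ s₂)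
  | fn {f t₁ t₂} : equ Γ t₁ t₂ → equ Γ (.fn f t₁) (.fn f t₂)
  | abs₁ {a t₁ t₂} : equ Γ t₁ t₂ → equ Γ (.abs a t₁) (.abs a t₂)
  | abs₂ {a b t₁ t₂} : a ≠ b → fresh Γ a t₂ → equ Γ t₁ (permTrm [(a, b)] t₂) →
      equ Γ (.abs a t₁) (.abs b t₂)
  | atom {a} : equ Γ (.atom a) (.atom a)
  | susp {π π' X} : (∀ c ∈ ds π π', (c, X) ∈ Γ) → equ Γ (.susp π X) (.susp π' X)

inductive weak : Trm → Trm → Prop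
  | unit : weak .unit .unit
  | atom {a} : weak (.atom a) (.atom a)
  | fn {f t t'} : weak t t' → weak (.fn f t) (.fn f t')
  | pair {t₁ t₂ s₁ s₂} : weak t₁ s₁ → weak t₂ s₂ → weak (.pair t₁ t₂) (.pair s₁ s₂)
  | abs {a t t'} : weak t t' → weak (.abs a t) (.abs a t')
  | susp {π π' X} : ds π π' = ∅ → weak (.susp π X) (.susp π' X)

def subst (σ : Var → Option Trm) : Trm → Trm
  | .unit => .unit
  | .pair t₁ t₂ => .pair (subst σ t₁) (subst σ t₂)
  | .fn f t => .fn f (subst σ t)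
  | .atom a => .atom a
  | .abs a t => .abs a (subst σ t)
  | .susp π X =>
      match σ X with
      | some t => permTrm π t
      | none => .susp π X

lemma permAtom_append (π π' : Perm) (a : Atom) :
    permAtom (π ++ π') a = permAtom π (permAtom π' a) := by
  induction π with
  | nil => rfl
  | cons p π ih => simp only [List.cons_append, permAtom, ih]

lemma ds_eq_empty_iff {π π' : Perm} : ds π π' = ∅ ↔ permAtom π = permAtom π' := by
  simp only [ds, Set.eq_empty_iff_forall_notMem, Set.mem_ofPred_eq, not_not, funext_iff]

lemma ds_append_right_eq_empty {π π' : Perm} (h : ds π π' = ∅) (ρ : Perm) :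
    ds (π ++ ρ) (π' ++ ρ) = ∅ := by
  rw [ds_eq_empty_iff] at h ⊢
  funext a
  rw [permAtom_append, permAtom_append, h]

theorem weak_of_ds_empty (π π' : Perm) (h : ds π π' = ∅) (t : Trm) :
    weak (permTrm π t) (permTrm π' t) := by
  have hπ : permAtom π = permAtom π' := ds_eq_empty_iff.mp h
  induction t with
  | unit => exact .unit
  | pair t₁ t₂ ih₁ ih₂ => exact .pair ih₁ ih₂
  | fn f t ih => exact .fn ih
  | atom a => simp only [permTrm, hπ]; exact .atom
  | abs a t ih => simp only [permTrm, hπ]; exact .abs ih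
  | susp ρ X => exact .susp (ds_append_right_eq_empty h ρ)
end

section
/- Freshness is preserved under nominal equality: if ∇ ⊢ t₁ ≈ t₂ and ∇ ⊢ a # t₁, then ∇ ⊢ a # t₂. -/
/-!
Induction on `∇ ⊢ t₁ ≈ t₂`, using that `a # π • t` implies `π⁻¹ • a # t`. For `c.t₁ ≈ b.t₂`
and `a ≠ b, c`, the induction hypothesis gives `a # (c b) • t₂`, and `(c b)` fixes `a`; for
`a = c` the rule itself supplies `c # t₂`. For `π·X ≈ π'·X`, either `π⁻¹ • a = π'⁻¹ • a`, or
`π'⁻¹ • a` is an atom on which `π` and `π'` disagree, hence fresh for `X` in `∇`.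
-/

lemma swap_swap (p : Atom × Atom) (a : Atom) : swap p (swap p a) = a := by
  obtain ⟨b, c⟩ := p
  simp only [swap]
  rcases eq_or_ne a b with rfl | hb <;> rcases eq_or_ne a c with rfl | hc <;> simp_all

lemma swap_of_ne {b c a : Atom} (hb : a ≠ b) (hc : a ≠ c) : swap (b, c) a = a := by
  simp [swap, hb, hc]

lemma permAtom_permAtom_reverse (π : Perm) (a : Atom) :
    permAtom π (permAtom π.reverse a) = a := by
  induction π generalizing a with
  | nil => rfl
  | cons p π ih =>
    rw [List.reverse_cons, permAtom_append]
    simp [permAtom, ih, swap_swap]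

lemma permAtom_reverse_permAtom (π : Perm) (a : Atom) :
    permAtom π.reverse (permAtom π a) = a := by
  simpa using permAtom_permAtom_reverse π.reverse a

lemma permAtom_reverse_mem_ds {π π' : Perm} {a : Atom}
    (h : permAtom π.reverse a ≠ permAtom π'.reverse a) : permAtom π'.reverse a ∈ ds π π' := by
  intro he
  rw [permAtom_permAtom_reverse] at he
  have := congrArg (permAtom π.reverse) he
  rw [permAtom_reverse_permAtom] at this
  exact h this.symm

lemma fresh.of_permTrm {Γ : Env} {π : Perm} {a : Atom} {t : Trm}
    (h : fresh Γ a (permTrm π t)) : fresh Γ (permAtom π.reverse a) t := by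
  induction t with
  | unit => exact .unit
  | pair t₁ t₂ ih₁ ih₂ =>
    cases h with
    | pair h₁ h₂ => exact .pair (ih₁ h₁) (ih₂ h₂)
  | fn f t ih =>
    cases h with
    | fn h => exact .fn (ih h)
  | atom b =>
    cases h with
    | atom hne => exact .atom fun e => hne (by rw [← e, permAtom_permAtom_reverse])
  | abs b t ih =>
    cases h with
    | abs₁ => rw [permAtom_reverse_permAtom]; exact .abs₁
    | abs₂ hne h => exact .abs₂ (fun e => hne (by rw [← e, permAtom_permAtom_reverse])) (ih h)
  | susp π' X =>
    cases h with
    | susp hmem =>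
      refine .susp ?_
      rwa [List.reverse_append, permAtom_append] at hmem

lemma fresh_abs_of_fresh_swap {Γ : Env} {a a' b : Atom} {t : Trm} (ha' : a ≠ a')
    (h : fresh Γ a (permTrm [(a', b)] t)) : fresh Γ a (.abs b t) := by
  by_cases hb : a = b
  · exact hb ▸ .abs₁
  · have h := h.of_permTrm
    rw [List.reverse_singleton, permAtom, permAtom, swap_of_ne ha' hb] at h
    exact .abs₂ hb h

lemma fresh_susp_of_ds {Γ : Env} {a : Atom} {π π' : Perm} {X : Var}
    (hds : ∀ c ∈ ds π π', (c, X) ∈ Γ) (h : fresh Γ a (.susp π X)) : fresh Γ a (.susp π' X) := by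
  cases h with
  | susp hmem =>
    refine .susp ?_
    by_cases hc : permAtom π.reverse a = permAtom π'.reverse a
    · rwa [← hc]
    · exact hds _ (permAtom_reverse_mem_ds hc)

theorem fresh_equ (Γ : Env) (a : Atom) (t₁ t₂ : Trm)
    (h₁ : equ Γ t₁ t₂) (h₂ : fresh Γ a t₁) : fresh Γ a t₂ := by
  induction h₁ with
  | unit | atom => exact h₂
  | pair _ _ ih₁ ih₂ =>
    cases h₂ with
    | pair h h' => exact .pair (ih₁ h) (ih₂ h')
  | fn _ ih =>
    cases h₂ with
    | fn h => exact .fn (ih h)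
  | abs₁ _ ih =>
    cases h₂ with
    | abs₁ => exact .abs₁
    | abs₂ hne h => exact .abs₂ hne (ih h)
  | abs₂ hne hfresh _ ih =>
    cases h₂ with
    | abs₁ => exact .abs₂ hne hfresh
    | abs₂ ha' h => exact fresh_abs_of_fresh_swap ha' (ih h)
  | susp hds => exact fresh_susp_of_ds hds h₂
end

section
/- Equivariance of nominal equality: if ∇ ⊢ t₁ ≈ t₂ then ∇ ⊢ π • t₁ ≈ π • t₂ for any permutation π. -/
/-!
Permutations act on terms only up to the representation of suspended permutations: lists with
the same action on atoms give terms that differ only in their suspensions, i.e. are `weak`ly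
related. Freshness and `≈` are insensitive to `weak` on the right, so in the different-binder
case the hypothesis `t₁ ≈ π • (a b) • t₂` may be rewritten to `t₁ ≈ (π a  π b) • π • t₂`, using
`π ∘ (a b) = (π a  π b) ∘ π` on atoms. The other cases are direct, since `π` is injective on atoms
and `ds (π ++ ρ) (π ++ ρ') = ds ρ ρ'`.
-/

lemma swap_apply (p : Atom × Atom) (a : Atom) : swap p a = Equiv.swap p.1 p.2 a :=
  (Equiv.swap_apply_def _ _ _).symm

def permEquiv (π : Perm) : Equiv.Perm Atom :=
  (π.map fun p => Equiv.swap p.1 p.2).prod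

lemma coe_permEquiv (π : Perm) : ⇑(permEquiv π) = permAtom π := by
  induction π with
  | nil => rfl
  | cons p π ih =>
    funext a
    simp [permEquiv, permAtom, swap_apply, ← ih]

lemma permEquiv_reverse (π : Perm) : permEquiv π.reverse = (permEquiv π)⁻¹ := by
  simp [permEquiv, List.prod_inv_reverse, List.map_reverse, Function.comp_def]

lemma permAtom_injective (π : Perm) : Function.Injective (permAtom π) :=
  coe_permEquiv π ▸ (permEquiv π).injective

lemma permAtom_reverse_congr {π π' : Perm} (h : permAtom π = permAtom π') :
    permAtom π.reverse = permAtom π'.reverse := by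
  have : permEquiv π = permEquiv π' := DFunLike.coe_injective (by simpa [coe_permEquiv] using h)
  rw [← coe_permEquiv, ← coe_permEquiv, permEquiv_reverse, permEquiv_reverse, this]

lemma permAtom_append_swap (π : Perm) (a b : Atom) :
    permAtom (π ++ [(a, b)]) = permAtom ([(permAtom π a, permAtom π b)] ++ π) := by
  funext c
  simpa [permAtom_append, permAtom, swap_apply]
    using (permAtom_injective π).map_swap a b c

lemma ds_append_left (π ρ ρ' : Perm) : ds (π ++ ρ) (π ++ ρ') = ds ρ ρ' := by
  ext c
  simp [ds, permAtom_append, (permAtom_injective π).ne_iff]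

lemma permTrm_append (π π' : Perm) (t : Trm) :
    permTrm (π ++ π') t = permTrm π (permTrm π' t) := by
  induction t with
  | unit => rfl
  | pair t₁ t₂ ih₁ ih₂ => simp [permTrm, ih₁, ih₂]
  | fn f t ih => simp [permTrm, ih]
  | atom a => simp [permTrm, permAtom_append]
  | abs a t ih => simp [permTrm, permAtom_append, ih]
  | susp π X => simp [permTrm]

lemma weak_permTrm_of_permAtom_eq {π π' : Perm} (h : permAtom π = permAtom π') (t : Trm) :
    weak (permTrm π t) (permTrm π' t) := by
  induction t with
  | unit => exact weak.unit
  | pair t₁ t₂ ih₁ ih₂ => exact weak.pair ih₁ ih₂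
  | fn f t ih => exact weak.fn ih
  | atom a => simpa [permTrm, h] using weak.atom
  | abs a t ih => simpa [permTrm, h] using weak.abs ih
  | susp ρ X =>
    refine weak.susp (ds_eq_empty_iff.2 ?_)
    funext a
    simp [permAtom_append, h]

lemma weak.permTrm {t t' : Trm} (π : Perm) (h : weak t t') :
    weak (permTrm π t) (permTrm π t') := by
  induction h with
  | unit => exact weak.unit
  | atom => exact weak.atom
  | fn _ ih => exact weak.fn ih
  | pair _ _ ih₁ ih₂ => exact weak.pair ih₁ ih₂
  | abs _ ih => exact weak.abs ih
  | susp hds => exact weak.susp ((ds_append_left _ _ _).trans hds)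

lemma fresh.permTrm {Γ : Env} {a : Atom} {t : Trm} (π : Perm) (h : fresh Γ a t) :
    fresh Γ (permAtom π a) (permTrm π t) := by
  induction h with
  | unit => exact fresh.unit
  | pair _ _ ih₁ ih₂ => exact fresh.pair ih₁ ih₂
  | fn _ ih => exact fresh.fn ih
  | abs₁ => exact fresh.abs₁
  | abs₂ hne _ ih => exact fresh.abs₂ ((permAtom_injective π).ne hne) ih
  | atom hne => exact fresh.atom ((permAtom_injective π).ne hne)
  | susp hmem =>
    refine fresh.susp ?_
    simpa [List.reverse_append, permAtom_append, permAtom_reverse_permAtom] using hmem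

lemma fresh.trans_weak {Γ : Env} {a : Atom} {t t' : Trm} (h : fresh Γ a t) (hw : weak t t') :
    fresh Γ a t' := by
  induction hw generalizing a with
  | unit => exact h
  | atom => exact h
  | fn _ ih => cases h with | fn h => exact fresh.fn (ih h)
  | pair _ _ ih₁ ih₂ => cases h with | pair h₁ h₂ => exact fresh.pair (ih₁ h₁) (ih₂ h₂)
  | abs _ ih =>
    cases h with
    | abs₁ => exact fresh.abs₁
    | abs₂ hne h => exact fresh.abs₂ hne (ih h)
  | susp hds =>
    cases h with
    | susp hmem => exact fresh.susp (permAtom_reverse_congr (ds_eq_empty_iff.1 hds) ▸ hmem)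

lemma equ.trans_weak {Γ : Env} {t₁ t₂ t₃ : Trm} (h : equ Γ t₁ t₂) (hw : weak t₂ t₃) :
    equ Γ t₁ t₃ := by
  induction h generalizing t₃ with
  | unit => cases hw; exact equ.unit
  | pair _ _ ih₁ ih₂ => cases hw with | pair w₁ w₂ => exact equ.pair (ih₁ w₁) (ih₂ w₂)
  | fn _ ih => cases hw with | fn w => exact equ.fn (ih w)
  | abs₁ _ ih => cases hw with | abs w => exact equ.abs₁ (ih w)
  | abs₂ hne hf _ ih =>
    cases hw with
    | abs w => exact equ.abs₂ hne (hf.trans_weak w) (ih (w.permTrm _))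
  | atom => cases hw; exact equ.atom
  | susp hmem =>
    cases hw with
    | susp hds =>
      refine equ.susp fun c hc => hmem c ?_
      simpa [ds, ds_eq_empty_iff.1 hds] using hc

theorem equ_equivariant (Γ : Env) (t₁ t₂ : Trm) (π : Perm)
    (h : equ Γ t₁ t₂) : equ Γ (permTrm π t₁) (permTrm π t₂) := by
  induction h with
  | unit => exact equ.unit
  | pair _ _ ih₁ ih₂ => exact equ.pair ih₁ ih₂
  | fn _ ih => exact equ.fn ih
  | abs₁ _ ih => exact equ.abs₁ ih
  | @abs₂ a b _ s₂ hne hf _ ih =>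
    refine equ.abs₂ ((permAtom_injective π).ne hne) (hf.permTrm π) ?_
    rw [← permTrm_append] at ih ⊢
    exact ih.trans_weak (weak_permTrm_of_permAtom_eq (permAtom_append_swap π a b) s₂)
  | atom => exact equ.atom
  | susp hmem => exact equ.susp fun c hc => hmem c (ds_append_left π _ _ ▸ hc)
end
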